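/- Let z be a point of X_{F_2}(m) and y a point of X_F(m). There exists a triangulation T of the (m+1)-gon that z properly colors but y does not if and only if I(y) is not a subset of I(z), where I(w) denotes the set of diagonals invalid for w. -/

import Mathlib

/-- The projective line over a field `F`. -/
abbrev P1 (F : Type*) [Field F] := Projectivization F (F × F)

/-- The point `[1:0]` of the projective line. -/
noncomputable def ptZero (F : Type*) [Field F] : P1 F :=
  Projectivization.mk F (1, 0) (fun h => one_ne_zero (congrArg Prod.fst h))

/-- The point `[0:1]` of the projective line. -/
noncomputable def ptInf (F : Type*) [Field F] : P1 F :=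
  Projectivization.mk F (0, 1) (fun h => one_ne_zero (congrArg Prod.snd h))

/-- The point `[1:1]` of the projective line. -/
noncomputable def ptOne (F : Type*) [Field F] : P1 F :=
  Projectivization.mk F (1, 1) (fun h => one_ne_zero (congrArg Prod.fst h))

/-- `p = (i, j)` is a diagonal of the convex `(m+1)`-gon with vertices `0, …, m`:
`i < j`, the two vertices are not consecutive, and `(0, m)` is excluded (it is a side). -/
def IsDiag (m : ℕ) (p : ℕ × ℕ) : Prop :=
  p.1 + 2 ≤ p.2 ∧ p.2 ≤ m ∧ ¬(p.1 = 0 ∧ p.2 = m)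

instance (m : ℕ) (p : ℕ × ℕ) : Decidable (IsDiag m p) := by unfold IsDiag; infer_instance

/-- The type of diagonals of the convex `(m+1)`-gon. -/
abbrev Diagonal (m : ℕ) := {p : ℕ × ℕ // IsDiag m p}

/-- Two diagonals cross in the interior of the polygon. -/
def Crossing {m : ℕ} (d e : Diagonal m) : Prop :=
  (d.val.1 < e.val.1 ∧ e.val.1 < d.val.2 ∧ d.val.2 < e.val.2) ∨
  (e.val.1 < d.val.1 ∧ d.val.1 < e.val.2 ∧ e.val.2 < d.val.2)

/-- A triangulation of the convex `(m+1)`-gon: a maximal set of pairwise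
non-crossing diagonals (maximality = having `(m+1) - 3` diagonals). -/
structure Triangulation (m : ℕ) where
  diags : Finset (Diagonal m)
  noncross : ∀ d ∈ diags, ∀ e ∈ diags, ¬ Crossing d e
  card_eq : diags.card = m - 2

/-- `y` takes distinct values on the endpoints of every diagonal of `T`
(i.e. `y` lies in the cluster torus of `T`). -/
def ProperDiags {F : Type*} [Field F] {m : ℕ} (T : Triangulation m) (y : ℕ → P1 F) : Prop :=
  ∀ d ∈ T.diags, y d.val.1 ≠ y d.val.2

/-- `c` is a proper coloring of the full graph of the triangulation `T`
(sides of the polygon together with the diagonals of `T`). -/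
def ProperGraph {F : Type*} [Field F] {m : ℕ} (T : Triangulation m) (c : ℕ → P1 F) : Prop :=
  (∀ i < m, c i ≠ c (i + 1)) ∧ c m ≠ c 0 ∧ ProperDiags T c

/-- `y` is a point of `X_F(m)`: `y 0 = [1:0]`, `y m = [0:1]`, consecutive entries distinct. -/
def XCond (F : Type*) [Field F] (m : ℕ) (y : ℕ → P1 F) : Prop :=
  y 0 = ptZero F ∧ y m = ptInf F ∧ ∀ i < m, y i ≠ y (i + 1)

/-- `y` is the alternating sequence `([1:0], [0:1], [1:0], …)` on `0, …, m`. -/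
def IsAltSeq (F : Type*) [Field F] (m : ℕ) (y : ℕ → P1 F) : Prop :=
  ∀ i ≤ m, y i = if i % 2 = 0 then ptZero F else ptInf F

/-- The diagonal `d` is valid for the point `y`: its endpoints have distinct labels and
on each of the two sub-polygons determined by `d` the labels take at least three values. -/
def ValidDiag (F : Type*) [Field F] (m : ℕ) (y : ℕ → P1 F) (d : Diagonal m) : Prop :=
  y d.val.1 ≠ y d.val.2 ∧
  3 ≤ (y '' (Set.Icc d.val.1 d.val.2)).ncard ∧
  3 ≤ (y '' (Set.Icc 0 d.val.1 ∪ Set.Icc d.val.2 m)).ncard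

/-- `T'` is obtained from `T` by removing the diagonals `old` and adding the diagonals `new`. -/
def SwapMove {m : ℕ} (T T' : Triangulation m) (old new : Finset (Diagonal m)) : Prop :=
  old ⊆ T.diags ∧ T'.diags = (T.diags \ old) ∪ new

/-- Zig-zag hexagonal move: inside a hexagonal sub-polygon with vertices
`v 0 < ⋯ < v 5`, replace the zig-zag `{15, 35, 36}` by the zig-zag `{24, 26, 46}`
(in the labels `1, …, 6` of the hexagon). -/
def ZigZagMoveOne {m : ℕ} (T T' : Triangulation m) : Prop :=
  ∃ v : Fin 6 → ℕ, StrictMono v ∧ v 5 ≤ m ∧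
    ∃ (h1 : IsDiag m (v 0, v 4)) (h2 : IsDiag m (v 2, v 4)) (h3 : IsDiag m (v 2, v 5))
      (h4 : IsDiag m (v 1, v 3)) (h5 : IsDiag m (v 1, v 5)) (h6 : IsDiag m (v 3, v 5)),
      SwapMove T T' {⟨(v 0, v 4), h1⟩, ⟨(v 2, v 4), h2⟩, ⟨(v 2, v 5), h3⟩}
        {⟨(v 1, v 3), h4⟩, ⟨(v 1, v 5), h5⟩, ⟨(v 3, v 5), h6⟩}

/-- Inscribed-triangle hexagonal move: inside a hexagonal sub-polygon with vertices
`v 0 < ⋯ < v 5`, replace the inscribed triangle `{13, 35, 51}` by `{24, 46, 62}`. -/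
def InscribedMoveOne {m : ℕ} (T T' : Triangulation m) : Prop :=
  ∃ v : Fin 6 → ℕ, StrictMono v ∧ v 5 ≤ m ∧
    ∃ (h1 : IsDiag m (v 0, v 2)) (h2 : IsDiag m (v 2, v 4)) (h3 : IsDiag m (v 0, v 4))
      (h4 : IsDiag m (v 1, v 3)) (h5 : IsDiag m (v 3, v 5)) (h6 : IsDiag m (v 1, v 5)),
      SwapMove T T' {⟨(v 0, v 2), h1⟩, ⟨(v 2, v 4), h2⟩, ⟨(v 0, v 4), h3⟩}
        {⟨(v 1, v 3), h4⟩, ⟨(v 3, v 5), h5⟩, ⟨(v 1, v 5), h6⟩}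

/-- A hexagonal move (in either direction). -/
def HexMove {m : ℕ} (T T' : Triangulation m) : Prop :=
  ZigZagMoveOne T T' ∨ ZigZagMoveOne T' T ∨ InscribedMoveOne T T' ∨ InscribedMoveOne T' T



/-!
A diagonal `d` is valid for a colouring `c` of the vertices exactly when some triangulation
containing `d` is properly coloured by `c`.

If a triangulation is properly coloured, cutting it along one of its diagonals gives two smaller
properly coloured triangulated polygons; iterating ends in a triangle, so each side of every
diagonal carries three colours. Conversely, a properly coloured polygon with at least four
vertices and three colours has an ear whose removal keeps three colours, so it has a properly
coloured triangulation; triangulating both sides of a valid `d` this way and gluing along `d`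
gives a properly coloured triangulation containing `d`.

Hence if `T` is proper for `z` but not for `y`, a diagonal of `T` with equal `y`-labels is valid
for `z` and invalid for `y`; and a diagonal valid for `z` but invalid for `y` lies in a
triangulation that is proper for `z` and cannot be proper for `y`.
-/

open Finset

theorem Finset.three_le_card_image_of_ne {α γ : Type*} [DecidableEq γ] {s : Finset α}
    {f : α → γ} {a b c : α} (ha : a ∈ s) (hb : b ∈ s) (hc : c ∈ s) (hab : f a ≠ f b)
    (hac : f a ≠ f c) (hbc : f b ≠ f c) : 3 ≤ #(s.image f) :=
  two_lt_card.2 ⟨f a, mem_image_of_mem f ha, f b, mem_image_of_mem f hb, f c,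
    mem_image_of_mem f hc, hab, hac, hbc⟩

theorem Finset.exists_ne_ne_of_three_le_card_image {α γ : Type*} [DecidableEq γ] {s : Finset α}
    {f : α → γ} (h : 3 ≤ #(s.image f)) (a b : γ) : ∃ x ∈ s, f x ≠ a ∧ f x ≠ b := by
  by_contra! H
  have hsub : s.image f ⊆ {a, b} := by
    intro t ht
    obtain ⟨x, hx, rfl⟩ := mem_image.1 ht
    by_cases h : f x = a
    · simp [h]
    · simp [H x hx h]
  have := (card_le_card hsub).trans card_le_two
  omega

namespace PolygonDissection

variable {β : Type*} {B : Finset ℕ} {c : ℕ → β} {d p q : ℕ × ℕ} {S S₁ S₂ : Finset (ℕ × ℕ)}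

/- A polygon is given by its finite vertex set `B ⊆ ℕ`, in the cyclic order induced by `<`.
A chord `d = (d.1, d.2)` with `d.1 < d.2` cuts it into `innerPolygon B d` (the vertices in
`[d.1, d.2]`) and `outerPolygon B d` (the vertices outside `(d.1, d.2)`). A triangulation is a
dissection by the maximal number `#B - 3` of diagonals. -/

def IsChord (B : Finset ℕ) (p : ℕ × ℕ) : Prop :=
  p.1 ∈ B ∧ p.2 ∈ B ∧ p.1 < p.2

def IsDiagonal (B : Finset ℕ) (p : ℕ × ℕ) : Prop :=
  IsChord B p ∧ (∃ t ∈ B, p.1 < t ∧ t < p.2) ∧ ∃ t ∈ B, t < p.1 ∨ p.2 < t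

def IsSide (B : Finset ℕ) (p : ℕ × ℕ) : Prop :=
  IsChord B p ∧ ¬ IsDiagonal B p

def Interleave (p q : ℕ × ℕ) : Prop :=
  (p.1 < q.1 ∧ q.1 < p.2 ∧ p.2 < q.2) ∨ (q.1 < p.1 ∧ p.1 < q.2 ∧ q.2 < p.2)

def innerPolygon (B : Finset ℕ) (d : ℕ × ℕ) : Finset ℕ := B.filter fun t => d.1 ≤ t ∧ t ≤ d.2

def outerPolygon (B : Finset ℕ) (d : ℕ × ℕ) : Finset ℕ := B.filter fun t => t ≤ d.1 ∨ d.2 ≤ t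

def IsDissection (B : Finset ℕ) (S : Finset (ℕ × ℕ)) : Prop :=
  (∀ p ∈ S, IsDiagonal B p) ∧ ∀ p ∈ S, ∀ q ∈ S, ¬ Interleave p q

def IsTriangulation (B : Finset ℕ) (S : Finset (ℕ × ℕ)) : Prop :=
  IsDissection B S ∧ #S + 3 = #B

def ProperOnSides (B : Finset ℕ) (c : ℕ → β) : Prop :=
  ∀ p, IsSide B p → c p.1 ≠ c p.2

def IsValid [DecidableEq β] (B : Finset ℕ) (c : ℕ → β) (d : ℕ × ℕ) : Prop :=
  c d.1 ≠ c d.2 ∧ 3 ≤ #((innerPolygon B d).image c) ∧ 3 ≤ #((outerPolygon B d).image c)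

instance (B : Finset ℕ) : DecidablePred (IsDiagonal B) := fun _ => by
  unfold IsDiagonal IsChord
  infer_instance

@[simp] theorem mem_innerPolygon {t : ℕ} : t ∈ innerPolygon B d ↔ t ∈ B ∧ d.1 ≤ t ∧ t ≤ d.2 :=
  mem_filter

@[simp] theorem mem_outerPolygon {t : ℕ} :
    t ∈ outerPolygon B d ↔ t ∈ B ∧ (t ≤ d.1 ∨ d.2 ≤ t) :=
  mem_filter

theorem Interleave.symm (h : Interleave p q) : Interleave q p := Or.symm h

theorem IsDiagonal.isChord (h : IsDiagonal B p) : IsChord B p := h.1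

theorem IsDiagonal.mono {A : Finset ℕ} (hAB : A ⊆ B) (h : IsDiagonal A p) : IsDiagonal B p := by
  obtain ⟨⟨h₁, h₂, h₁₂⟩, ⟨t, ht, hti⟩, ⟨s, hs, hso⟩⟩ := h
  exact ⟨⟨hAB h₁, hAB h₂, h₁₂⟩, ⟨t, hAB ht, hti⟩, ⟨s, hAB hs, hso⟩⟩

theorem IsChord.innerPolygon_self (hd : IsChord B d) : IsChord (innerPolygon B d) d :=
  ⟨mem_innerPolygon.2 ⟨hd.1, le_rfl, hd.2.2.le⟩, mem_innerPolygon.2 ⟨hd.2.1, hd.2.2.le, le_rfl⟩,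
    hd.2.2⟩

theorem IsChord.outerPolygon_self (hd : IsChord B d) : IsChord (outerPolygon B d) d :=
  ⟨mem_outerPolygon.2 ⟨hd.1, Or.inl le_rfl⟩, mem_outerPolygon.2 ⟨hd.2.1, Or.inr le_rfl⟩, hd.2.2⟩

theorem IsChord.not_interleave (hp : IsChord (innerPolygon B d) p)
    (hq : IsChord (outerPolygon B d) q) : ¬ Interleave p q := by
  obtain ⟨hp₁, hp₂, -⟩ := hp
  obtain ⟨hq₁, hq₂, -⟩ := hq
  rw [mem_innerPolygon] at hp₁ hp₂
  rw [mem_outerPolygon] at hq₁ hq₂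
  unfold Interleave
  omega

theorem isDiagonal_innerPolygon_iff (hd : IsChord B d) :
    IsDiagonal (innerPolygon B d) q ↔ IsDiagonal B q ∧ d.1 ≤ q.1 ∧ q.2 ≤ d.2 ∧ q ≠ d := by
  obtain ⟨hd₁, hd₂, hd₁₂⟩ := hd
  constructor
  · intro hq
    refine ⟨hq.mono (filter_subset _ _), ?_⟩
    obtain ⟨⟨hq₁, hq₂, -⟩, -, ⟨s, hs, hso⟩⟩ := hq
    rw [mem_innerPolygon] at hq₁ hq₂ hs
    refine ⟨hq₁.2.1, hq₂.2.2, ?_⟩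
    rintro rfl
    omega
  · rintro ⟨⟨⟨hq₁, hq₂, hq₁₂⟩, ⟨t, ht, hti⟩, -⟩, hdq₁, hqd₂, hqd⟩
    refine ⟨⟨mem_innerPolygon.2 ⟨hq₁, hdq₁, by omega⟩, mem_innerPolygon.2 ⟨hq₂, by omega, hqd₂⟩,
      hq₁₂⟩, ⟨t, mem_innerPolygon.2 ⟨ht, by omega, by omega⟩, hti⟩, ?_⟩
    by_cases h : d.1 < q.1
    · exact ⟨d.1, mem_innerPolygon.2 ⟨hd₁, le_rfl, hd₁₂.le⟩, Or.inl h⟩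
    · refine ⟨d.2, mem_innerPolygon.2 ⟨hd₂, hd₁₂.le, le_rfl⟩, Or.inr ?_⟩
      have : q.2 ≠ d.2 := fun h' => hqd (Prod.ext (by omega) h')
      omega

theorem isDiagonal_outerPolygon_iff (hd : IsChord B d) :
    IsDiagonal (outerPolygon B d) q ↔
      IsDiagonal B q ∧ ¬ Interleave d q ∧ ¬ (d.1 ≤ q.1 ∧ q.2 ≤ d.2) := by
  obtain ⟨hd₁, hd₂, hd₁₂⟩ := hd
  unfold Interleave
  constructor
  · intro hq
    refine ⟨hq.mono (filter_subset _ _), ?_⟩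
    obtain ⟨⟨hq₁, hq₂, -⟩, ⟨t, ht, hti⟩, -⟩ := hq
    rw [mem_outerPolygon] at hq₁ hq₂ ht
    omega
  · rintro ⟨⟨⟨hq₁, hq₂, hq₁₂⟩, ⟨t, ht, hti⟩, ⟨s, hs, hso⟩⟩, hdq, hnest⟩
    have hd₁' : d.1 ∈ outerPolygon B d := mem_outerPolygon.2 ⟨hd₁, Or.inl le_rfl⟩
    have hd₂' : d.2 ∈ outerPolygon B d := mem_outerPolygon.2 ⟨hd₂, Or.inr le_rfl⟩
    refine ⟨⟨mem_outerPolygon.2 ⟨hq₁, by omega⟩, mem_outerPolygon.2 ⟨hq₂, by omega⟩, hq₁₂⟩, ?_, ?_⟩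
    · by_cases h : t ≤ d.1 ∨ d.2 ≤ t
      · exact ⟨t, mem_outerPolygon.2 ⟨ht, h⟩, hti⟩
      by_cases h' : q.1 < d.1
      · exact ⟨d.1, hd₁', by omega⟩
      · exact ⟨d.2, hd₂', by omega⟩
    · by_cases h : s ≤ d.1 ∨ d.2 ≤ s
      · exact ⟨s, mem_outerPolygon.2 ⟨hs, h⟩, hso⟩
      by_cases h' : s < q.1
      · exact ⟨d.1, hd₁', by omega⟩
      · exact ⟨d.2, hd₂', by omega⟩

theorem card_innerPolygon_add_card_outerPolygon (hd : IsChord B d) :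
    #(innerPolygon B d) + #(outerPolygon B d) = #B + 2 := by
  obtain ⟨hd₁, hd₂, hd₁₂⟩ := hd
  have hunion : innerPolygon B d ∪ outerPolygon B d = B := by
    rw [innerPolygon, outerPolygon, ← filter_or, filter_true_of_mem]
    intro t _
    omega
  have hinter : innerPolygon B d ∩ outerPolygon B d = {d.1, d.2} := by
    ext t
    simp only [mem_inter, mem_innerPolygon, mem_outerPolygon, mem_insert, mem_singleton]
    constructor
    · omega
    · rintro (rfl | rfl) <;> simp [*, hd₁₂.le]
  rw [← card_union_add_card_inter, hunion, hinter, card_pair hd₁₂.ne]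

theorem IsDiagonal.innerPolygon_ssubset (h : IsDiagonal B d) : innerPolygon B d ⊂ B := by
  obtain ⟨-, -, s, hs, hso⟩ := h
  exact filter_ssubset.2 ⟨s, hs, by omega⟩

theorem IsDiagonal.outerPolygon_ssubset (h : IsDiagonal B d) : outerPolygon B d ⊂ B := by
  obtain ⟨-, ⟨t, ht, hti⟩, -⟩ := h
  exact filter_ssubset.2 ⟨t, ht, by omega⟩

theorem IsDiagonal.three_le_card_innerPolygon (h : IsDiagonal B d) : 3 ≤ #(innerPolygon B d) := by
  have := card_lt_card h.outerPolygon_ssubset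
  have := card_innerPolygon_add_card_outerPolygon h.isChord
  omega

theorem IsDiagonal.three_le_card_outerPolygon (h : IsDiagonal B d) : 3 ≤ #(outerPolygon B d) := by
  have := card_lt_card h.innerPolygon_ssubset
  have := card_innerPolygon_add_card_outerPolygon h.isChord
  omega

theorem IsDiagonal.four_le_card (h : IsDiagonal B d) : 4 ≤ #B := by
  have := h.three_le_card_innerPolygon
  have := card_lt_card h.innerPolygon_ssubset
  omega

theorem IsDissection.filter_isDiagonal (h : IsDissection B S) (B' : Finset ℕ) :
    IsDissection B' (S.filter (IsDiagonal B')) :=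
  ⟨fun _ hp => (mem_filter.1 hp).2,
    fun _ hp _ hq => h.2 _ (mem_filter.1 hp).1 _ (mem_filter.1 hq).1⟩

theorem IsDissection.card_split (h : IsDissection B S) (hd : d ∈ S) :
    #(S.filter (IsDiagonal (innerPolygon B d))) + #(S.filter (IsDiagonal (outerPolygon B d))) + 1
      = #S := by
  have hdB := (h.1 d hd).isChord
  have hdisj : Disjoint (S.filter (IsDiagonal (innerPolygon B d)))
      (S.filter (IsDiagonal (outerPolygon B d))) := by
    refine disjoint_filter.2 fun q _ hin hout => ?_
    obtain ⟨-, hdq₁, hqd₂, -⟩ := (isDiagonal_innerPolygon_iff hdB).1 hin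
    exact ((isDiagonal_outerPolygon_iff hdB).1 hout).2.2 ⟨hdq₁, hqd₂⟩
  have hunion : S.filter (IsDiagonal (innerPolygon B d)) ∪
      S.filter (IsDiagonal (outerPolygon B d)) = S.erase d := by
    ext q
    simp only [mem_union, mem_filter, mem_erase, isDiagonal_innerPolygon_iff hdB,
      isDiagonal_outerPolygon_iff hdB]
    constructor
    · rintro (⟨hq, -, -, -, hqd⟩ | ⟨hq, -, -, hnest⟩)
      · exact ⟨hqd, hq⟩
      · exact ⟨by rintro rfl; exact hnest ⟨le_rfl, le_rfl⟩, hq⟩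
    · rintro ⟨hqd, hq⟩
      by_cases hnest : d.1 ≤ q.1 ∧ q.2 ≤ d.2
      · exact Or.inl ⟨hq, h.1 q hq, hnest.1, hnest.2, hqd⟩
      · exact Or.inr ⟨hq, h.1 q hq, h.2 d hd q hq, hnest⟩
  rw [← card_union_of_disjoint hdisj, hunion, card_erase_add_one hd]

theorem IsDissection.card_add_three_le (h : IsDissection B S) (hB : 3 ≤ #B) : #S + 3 ≤ #B := by
  induction B using Finset.strongInduction generalizing S with
  | H B ih =>
    obtain rfl | ⟨d, hd⟩ := S.eq_empty_or_nonempty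
    · simpa using hB
    have hdB := h.1 d hd
    have := ih _ hdB.innerPolygon_ssubset (h.filter_isDiagonal _) hdB.three_le_card_innerPolygon
    have := ih _ hdB.outerPolygon_ssubset (h.filter_isDiagonal _) hdB.three_le_card_outerPolygon
    have := card_innerPolygon_add_card_outerPolygon hdB.isChord
    have := h.card_split hd
    omega

theorem IsTriangulation.split (h : IsTriangulation B S) (hd : d ∈ S) :
    IsTriangulation (innerPolygon B d) (S.filter (IsDiagonal (innerPolygon B d))) ∧
      IsTriangulation (outerPolygon B d) (S.filter (IsDiagonal (outerPolygon B d))) := by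
  have hdB := h.1.1 d hd
  have := (h.1.filter_isDiagonal _).card_add_three_le hdB.three_le_card_innerPolygon
  have := (h.1.filter_isDiagonal _).card_add_three_le hdB.three_le_card_outerPolygon
  have := card_innerPolygon_add_card_outerPolygon hdB.isChord
  have := h.1.card_split hd
  have := h.2
  exact ⟨⟨h.1.filter_isDiagonal _, by omega⟩, ⟨h.1.filter_isDiagonal _, by omega⟩⟩

theorem IsTriangulation.glue (hd : IsDiagonal B d) (h₁ : IsTriangulation (innerPolygon B d) S₁)
    (h₂ : IsTriangulation (outerPolygon B d) S₂) : IsTriangulation B (insert d (S₁ ∪ S₂)) := by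
  have hdB := hd.isChord
  have hS₁ : ∀ p ∈ S₁, IsDiagonal B p ∧ d.1 ≤ p.1 ∧ p.2 ≤ d.2 ∧ p ≠ d := fun p hp =>
    (isDiagonal_innerPolygon_iff hdB).1 (h₁.1.1 p hp)
  have hS₂ : ∀ q ∈ S₂, IsDiagonal B q ∧ ¬ Interleave d q ∧ ¬ (d.1 ≤ q.1 ∧ q.2 ≤ d.2) :=
    fun q hq => (isDiagonal_outerPolygon_iff hdB).1 (h₂.1.1 q hq)
  have hin : ∀ p ∈ S₁, IsChord (innerPolygon B d) p := fun p hp => (h₁.1.1 p hp).isChord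
  have hout : ∀ q ∈ S₂, IsChord (outerPolygon B d) q := fun q hq => (h₂.1.1 q hq).isChord
  have hdisj : Disjoint S₁ S₂ := disjoint_left.2 fun p hp₁ hp₂ =>
    (hS₂ p hp₂).2.2 ⟨(hS₁ p hp₁).2.1, (hS₁ p hp₁).2.2.1⟩
  have hdS : d ∉ S₁ ∪ S₂ := by
    rw [mem_union, not_or]
    exact ⟨fun h => (hS₁ d h).2.2.2 rfl, fun h => (hS₂ d h).2.2 ⟨le_rfl, le_rfl⟩⟩
  refine ⟨⟨?_, ?_⟩, ?_⟩
  · simp only [mem_insert, mem_union]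
    rintro p (rfl | hp | hp)
    exacts [hd, (hS₁ p hp).1, (hS₂ p hp).1]
  · simp only [mem_insert, mem_union]
    rintro p (rfl | hp | hp) q (rfl | hq | hq)
    · exact hdB.innerPolygon_self.not_interleave hdB.outerPolygon_self
    · exact fun h => (hin q hq).not_interleave hdB.outerPolygon_self h.symm
    · exact (hS₂ q hq).2.1
    · exact (hin p hp).not_interleave hdB.outerPolygon_self
    · exact h₁.1.2 p hp q hq
    · exact (hin p hp).not_interleave (hout q hq)
    · exact fun h => (hS₂ p hp).2.1 h.symm
    · exact fun h => (hin q hq).not_interleave (hout p hp) h.symm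
    · exact h₂.1.2 p hp q hq
  · rw [card_insert_of_notMem hdS, card_union_of_disjoint hdisj]
    have := card_innerPolygon_add_card_outerPolygon hdB
    have := h₁.2
    have := h₂.2
    omega

theorem IsSide.of_innerPolygon (hd : IsChord B d) (hp : IsSide (innerPolygon B d) p) :
    IsSide B p ∨ p = d := by
  obtain ⟨⟨hp₁, hp₂, hp₁₂⟩, hnd⟩ := hp
  rw [mem_innerPolygon] at hp₁ hp₂
  by_cases hpd : p = d
  · exact Or.inr hpd
  exact Or.inl ⟨⟨hp₁.1, hp₂.1, hp₁₂⟩, fun hdiag =>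
    hnd ((isDiagonal_innerPolygon_iff hd).2 ⟨hdiag, hp₁.2.1, hp₂.2.2, hpd⟩)⟩

theorem IsSide.of_outerPolygon (hd : IsChord B d) (hp : IsSide (outerPolygon B d) p) :
    IsSide B p ∨ p = d := by
  obtain ⟨⟨hp₁, hp₂, hp₁₂⟩, hnd⟩ := hp
  rw [mem_outerPolygon] at hp₁ hp₂
  by_cases hpd : p = d
  · exact Or.inr hpd
  have hnest : ¬ (d.1 ≤ p.1 ∧ p.2 ≤ d.2) := fun h => hpd (Prod.ext (by omega) (by omega))
  exact Or.inl ⟨⟨hp₁.1, hp₂.1, hp₁₂⟩, fun hdiag =>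
    hnd ((isDiagonal_outerPolygon_iff hd).2 ⟨hdiag, by unfold Interleave; omega, hnest⟩)⟩

theorem ProperOnSides.innerPolygon (hc : ProperOnSides B c) (hd : IsChord B d)
    (hcd : c d.1 ≠ c d.2) : ProperOnSides (innerPolygon B d) c := fun p hp =>
  (hp.of_innerPolygon hd).elim (hc p) (by rintro rfl; exact hcd)

theorem ProperOnSides.outerPolygon (hc : ProperOnSides B c) (hd : IsChord B d)
    (hcd : c d.1 ≠ c d.2) : ProperOnSides (outerPolygon B d) c := fun p hp =>
  (hp.of_outerPolygon hd).elim (hc p) (by rintro rfl; exact hcd)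

theorem ProperOnSides.injOn_of_card_eq_three (hc : ProperOnSides B c) (hB : #B = 3) :
    Set.InjOn c B := by
  have hne : ∀ a ∈ B, ∀ b ∈ B, a < b → c a ≠ c b := fun a ha b hb hab =>
    hc (a, b) ⟨⟨ha, hb, hab⟩, fun h => by have := h.four_le_card; omega⟩
  intro a ha b hb hab
  by_contra hne'
  rcases lt_or_gt_of_ne hne' with h | h
  exacts [hne a ha b hb h hab, hne b hb a ha h hab.symm]

noncomputable def vertex (B : Finset ℕ) (i : ℕ) : ℕ := Nat.nth (· ∈ B) i

section vertex

variable {i j : ℕ}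

theorem vertex_mem (hi : i < #B) : vertex B i ∈ B :=
  Nat.nth_mem_of_lt_card B.finite_toSet (by simpa using hi)

theorem vertex_lt_vertex_iff (hi : i < #B) (hj : j < #B) : vertex B i < vertex B j ↔ i < j :=
  (Nat.nth_strictMonoOn B.finite_toSet).lt_iff_lt (by simpa using hi) (by simpa using hj)

theorem vertex_lt_vertex (hij : i < j) (hj : j < #B) : vertex B i < vertex B j :=
  (vertex_lt_vertex_iff (hij.trans hj) hj).2 hij

theorem exists_vertex_eq {t : ℕ} (ht : t ∈ B) : ∃ i < #B, vertex B i = t := by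
  simpa [vertex] using Nat.exists_lt_card_finite_nth_eq B.finite_toSet ht

theorem ProperOnSides.vertex_add_one (hc : ProperOnSides B c) (hi : i + 1 < #B) :
    c (vertex B i) ≠ c (vertex B (i + 1)) :=
  hc (vertex B i, vertex B (i + 1))
    ⟨⟨vertex_mem (by omega), vertex_mem hi, vertex_lt_vertex (by omega) hi⟩,
      fun ⟨_, ⟨t, ht, hti⟩, _⟩ => by
        obtain ⟨k, hk, rfl⟩ := exists_vertex_eq ht
        have := (vertex_lt_vertex_iff (by omega) hk).1 hti.1
        have := (vertex_lt_vertex_iff hk hi).1 hti.2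
        omega⟩

theorem ProperOnSides.vertex_zero (hc : ProperOnSides B c) (hB : 2 ≤ #B) :
    c (vertex B 0) ≠ c (vertex B (#B - 1)) :=
  hc (vertex B 0, vertex B (#B - 1))
    ⟨⟨vertex_mem (by omega), vertex_mem (by omega), vertex_lt_vertex (by omega) (by omega)⟩,
      fun ⟨_, _, ⟨t, ht, hto⟩⟩ => by
        obtain ⟨k, hk, rfl⟩ := exists_vertex_eq ht
        rcases hto with h | h
        · have := (vertex_lt_vertex_iff hk (by omega)).1 h
          omega
        · have := (vertex_lt_vertex_iff (by omega) hk).1 h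
          omega⟩

end vertex

variable [DecidableEq β]

theorem IsTriangulation.three_le_card_image (h : IsTriangulation B S) (hc : ProperOnSides B c)
    (hS : ∀ p ∈ S, c p.1 ≠ c p.2) : 3 ≤ #(B.image c) := by
  induction B using Finset.strongInduction generalizing S with
  | H B ih =>
    obtain rfl | ⟨d, hd⟩ := S.eq_empty_or_nonempty
    · have hB : #B = 3 := by simpa using h.2.symm
      rw [card_image_of_injOn (hc.injOn_of_card_eq_three hB), hB]
    have hdB := h.1.1 d hd
    calc 3 ≤ #((innerPolygon B d).image c) :=
          ih _ hdB.innerPolygon_ssubset (h.split hd).1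
            (hc.innerPolygon hdB.isChord (hS d hd)) fun p hp => hS p (mem_filter.1 hp).1
      _ ≤ #(B.image c) := card_le_card (image_subset_image (filter_subset _ _))

theorem IsTriangulation.isValid_of_mem (h : IsTriangulation B S) (hc : ProperOnSides B c)
    (hS : ∀ p ∈ S, c p.1 ≠ c p.2) (hd : d ∈ S) : IsValid B c d := by
  have hdB := (h.1.1 d hd).isChord
  have hS' : ∀ B', ∀ p ∈ S.filter (IsDiagonal B'), c p.1 ≠ c p.2 := fun _ p hp =>
    hS p (mem_filter.1 hp).1
  exact ⟨hS d hd,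
    (h.split hd).1.three_le_card_image (hc.innerPolygon hdB (hS d hd)) (hS' _),
    (h.split hd).2.three_le_card_image (hc.outerPolygon hdB (hS d hd)) (hS' _)⟩

theorem exists_ear_of_cyclic_proper {s : ℕ → β} {n : ℕ} (hn : 4 ≤ n)
    (hs : ∀ i, i + 1 < n → s i ≠ s (i + 1)) (hwrap : s 0 ≠ s (n - 1))
    (h3 : 3 ≤ #((range n).image s)) :
    ∃ i, i + 2 < n ∧ s i ≠ s (i + 2) ∧ 3 ≤ #(((range n).erase (i + 1)).image s) := by
  have mem : ∀ i a, a < n → a ≠ i + 1 → a ∈ (range n).erase (i + 1) := fun _ _ ha hai =>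
    mem_erase.2 ⟨hai, mem_range.2 ha⟩
  have h01 : s 0 ≠ s 1 := hs 0 (by omega)
  have hex : ∃ j, j ∈ range n ∧ s j ≠ s 0 ∧ s j ≠ s 1 :=
    exists_ne_ne_of_three_le_card_image h3 (s 0) (s 1)
  -- `j` is the first vertex whose colour is new; for `j ≥ 3` the ear at `j - 1` works, and
  -- for `j = 2` one of the ears at `1`, `2`, `3` does.
  obtain ⟨hjn, hj0, hj1⟩ := Nat.find_spec hex
  rw [mem_range] at hjn
  have hmin : ∀ k < Nat.find hex, s k = s 0 ∨ s k = s 1 := fun k hk => by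
    have hk' := Nat.find_min hex hk
    by_contra! hne
    exact hk' ⟨mem_range.2 (by omega), hne⟩
  set j := Nat.find hex
  have hj2 : 2 ≤ j := by
    by_contra
    interval_cases j <;> simp_all
  by_cases hj3 : 3 ≤ j
  · refine ⟨j - 2, by omega, ?_, three_le_card_image_of_ne
      (mem _ 0 (by omega) (by omega)) (mem _ 1 (by omega) (by omega)) (mem _ j hjn (by omega))
      h01 hj0.symm hj1.symm⟩
    rw [show j - 2 + 2 = j by omega]
    rcases hmin (j - 2) (by omega) with h | h <;> rw [h]
    exacts [hj0.symm, hj1.symm]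
  have hj : j = 2 := by omega
  rw [hj] at hj0 hj1
  by_cases hrep : ∃ k < n, k ≠ 1 ∧ s k = s 1
  · obtain ⟨k, hk, hk1, hsk⟩ := hrep
    exact ⟨0, by omega, hj0.symm, three_le_card_image_of_ne (mem 0 0 (by omega) (by omega))
      (mem 0 2 (by omega) (by omega)) (mem 0 k hk hk1) hj0.symm (hsk ▸ h01) (hsk ▸ hj1)⟩
  push Not at hrep
  have h13 : s 1 ≠ s 3 := fun h => hrep 3 (by omega) (by omega) h.symm
  by_cases h30 : s 3 = s 0
  · have hn5 : 5 ≤ n := by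
      by_contra
      obtain rfl : n = 4 := by omega
      exact hwrap h30.symm
    by_cases h42 : s 4 = s 2
    · exact ⟨1, by omega, h13, three_le_card_image_of_ne (mem 1 0 (by omega) (by omega))
        (mem 1 1 (by omega) (by omega)) (mem 1 4 (by omega) (by omega)) h01
        (h42 ▸ hj0.symm) (h42 ▸ hj1.symm)⟩
    · exact ⟨2, by omega, Ne.symm h42, three_le_card_image_of_ne
        (mem 2 0 (by omega) (by omega)) (mem 2 1 (by omega) (by omega))
        (mem 2 2 (by omega) (by omega)) h01 hj0.symm hj1.symm⟩
  · exact ⟨1, by omega, h13, three_le_card_image_of_ne (mem 1 0 (by omega) (by omega))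
      (mem 1 1 (by omega) (by omega)) (mem 1 3 (by omega) (by omega)) h01
      (Ne.symm h30) h13⟩


theorem exists_isValid_diagonal (hB : 4 ≤ #B) (hc : ProperOnSides B c)
    (h3 : 3 ≤ #(B.image c)) : ∃ d, IsDiagonal B d ∧ IsValid B c d := by
  have h3' : 3 ≤ #((range #B).image (c ∘ vertex B)) := h3.trans <| card_le_card fun x hx => by
    obtain ⟨t, ht, rfl⟩ := mem_image.1 hx
    obtain ⟨k, hk, rfl⟩ := exists_vertex_eq ht
    exact mem_image_of_mem _ (mem_range.2 hk)
  obtain ⟨i, hi, hne, h3i⟩ := exists_ear_of_cyclic_proper hB (fun _ => hc.vertex_add_one)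
    (hc.vertex_zero (by omega)) h3'
  have hi₀ : vertex B i < vertex B (i + 2) := vertex_lt_vertex (by omega) hi
  refine ⟨(vertex B i, vertex B (i + 2)), ⟨⟨vertex_mem (by omega), vertex_mem hi, hi₀⟩,
    ⟨vertex B (i + 1), vertex_mem (by omega), vertex_lt_vertex (by omega) (by omega),
      vertex_lt_vertex (by omega) hi⟩, ?_⟩, hne, ?_, ?_⟩
  · by_cases hi0 : i = 0
    · exact ⟨vertex B (#B - 1), vertex_mem (by omega),
        Or.inr (vertex_lt_vertex (by omega) (by omega))⟩
    · exact ⟨vertex B 0, vertex_mem (by omega), Or.inl (vertex_lt_vertex (by omega) (by omega))⟩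
  · refine three_le_card_image_of_ne (b := vertex B (i + 1)) ?_ ?_ ?_
      (hc.vertex_add_one (by omega)) hne (hc.vertex_add_one (by omega))
    · exact mem_innerPolygon.2 ⟨vertex_mem (by omega), le_rfl, hi₀.le⟩
    · exact mem_innerPolygon.2 ⟨vertex_mem (by omega),
        (vertex_lt_vertex (by omega) (by omega)).le, (vertex_lt_vertex (by omega) hi).le⟩
    · exact mem_innerPolygon.2 ⟨vertex_mem hi, hi₀.le, le_rfl⟩
  · refine h3i.trans (card_le_card fun x hx => ?_)
    obtain ⟨k, hk, rfl⟩ := mem_image.1 hx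
    rw [mem_erase, mem_range] at hk
    refine mem_image_of_mem c (mem_outerPolygon.2 ⟨vertex_mem hk.2, ?_⟩)
    rcases Nat.lt_or_ge k (i + 1) with h | h
    · exact Or.inl (not_lt.1 fun h' => by
        have := (vertex_lt_vertex_iff (by omega) hk.2).1 h'
        omega)
    · exact Or.inr (not_lt.1 fun h' => by
        have := (vertex_lt_vertex_iff hk.2 hi).1 h'
        omega)

theorem exists_isTriangulation_mem_of_isValid (hc : ProperOnSides B c) (hd : IsDiagonal B d)
    (hv : IsValid B c d) : ∃ S, IsTriangulation B S ∧ d ∈ S ∧ ∀ p ∈ S, c p.1 ≠ c p.2 := by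
  induction B using Finset.strongInduction generalizing d with
  | H B ih =>
    have htri : ∀ B' ⊂ B, ProperOnSides B' c → 3 ≤ #(B'.image c) →
        ∃ S, IsTriangulation B' S ∧ ∀ p ∈ S, c p.1 ≠ c p.2 := by
      intro B' hB' hc' h3'
      have := h3'.trans card_image_le
      obtain h | h : #B' = 3 ∨ 4 ≤ #B' := by omega
      · exact ⟨∅, ⟨⟨by simp, by simp⟩, by simp [h]⟩, by simp⟩
      · obtain ⟨d', hd', hv'⟩ := exists_isValid_diagonal h hc' h3'
        obtain ⟨S, hS, -, hSc⟩ := ih B' hB' hc' hd' hv'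
        exact ⟨S, hS, hSc⟩
    obtain ⟨S₁, h₁, hc₁⟩ :=
      htri _ hd.innerPolygon_ssubset (hc.innerPolygon hd.isChord hv.1) hv.2.1
    obtain ⟨S₂, h₂, hc₂⟩ :=
      htri _ hd.outerPolygon_ssubset (hc.outerPolygon hd.isChord hv.1) hv.2.2
    refine ⟨_, IsTriangulation.glue hd h₁ h₂, mem_insert_self _ _, ?_⟩
    simp only [mem_insert, mem_union]
    rintro p (rfl | hp | hp)
    exacts [hv.1, hc₁ p hp, hc₂ p hp]

end PolygonDissection

open Finset PolygonDissection

theorem ptZero_ne_ptInf (F : Type*) [Field F] : ptZero F ≠ ptInf F := by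
  rw [ptZero, ptInf, Ne, Projectivization.mk_eq_mk_iff]
  rintro ⟨u, hu⟩
  simpa [Units.smul_def] using congrArg Prod.fst hu

theorem isDiagonal_range_iff {m : ℕ} {p : ℕ × ℕ} : IsDiagonal (range (m + 1)) p ↔ IsDiag m p := by
  simp only [IsDiagonal, IsChord, IsDiag, mem_range]
  constructor
  · rintro ⟨⟨-, h₂, -⟩, ⟨t, -, hti⟩, ⟨s, hs, hso⟩⟩
    omega
  · rintro ⟨h₁, h₂, h₃⟩
    refine ⟨⟨by omega, by omega, by omega⟩, ⟨p.1 + 1, by omega, by omega, by omega⟩, ?_⟩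
    by_cases h : p.1 = 0
    · exact ⟨m, by omega, Or.inr (by omega)⟩
    · exact ⟨0, by omega, Or.inl (by omega)⟩

theorem XCond.properOnSides {F : Type*} [Field F] {m : ℕ} {y : ℕ → P1 F} (hy : XCond F m y) :
    ProperOnSides (range (m + 1)) y := by
  rintro p ⟨⟨h₁, h₂, h₁₂⟩, hnd⟩
  rw [isDiagonal_range_iff, IsDiag] at hnd
  rw [mem_range] at h₁ h₂
  obtain h | ⟨h0, hm⟩ : p.2 = p.1 + 1 ∨ (p.1 = 0 ∧ p.2 = m) := by omega
  · rw [h]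
    exact hy.2.2 _ (by omega)
  · rw [h0, hm, hy.1, hy.2.1]
    exact ptZero_ne_ptInf F

theorem validDiag_iff {F : Type*} [Field F] [DecidableEq (P1 F)] {m : ℕ} {y : ℕ → P1 F}
    {d : Diagonal m} : ValidDiag F m y d ↔ IsValid (range (m + 1)) y d.val := by
  have hd₁₂ := d.2.1
  have hd₂ := d.2.2.1
  have hin : (innerPolygon (range (m + 1)) d.val : Set ℕ) = Set.Icc d.val.1 d.val.2 := by
    ext t
    simp only [innerPolygon, coe_filter, mem_range, Set.mem_ofPred_eq, Set.mem_Icc]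
    omega
  have hout : (outerPolygon (range (m + 1)) d.val : Set ℕ) =
      Set.Icc 0 d.val.1 ∪ Set.Icc d.val.2 m := by
    ext t
    simp only [outerPolygon, coe_filter, mem_range, Set.mem_ofPred_eq, Set.mem_Icc, Set.mem_union]
    omega
  simp only [ValidDiag, IsValid, ← hin, ← hout, ← coe_image, Set.ncard_coe_finset]

namespace Triangulation

variable {m : ℕ}

def pairs (T : Triangulation m) : Finset (ℕ × ℕ) := T.diags.map (Function.Embedding.subtype _)

theorem properDiags_iff {F : Type*} [Field F] (T : Triangulation m) (w : ℕ → P1 F) :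
    ProperDiags T w ↔ ∀ p ∈ T.pairs, w p.1 ≠ w p.2 := by
  simp [ProperDiags, pairs]

theorem isTriangulation_pairs (T : Triangulation m) (hm : 2 ≤ m) :
    IsTriangulation (range (m + 1)) T.pairs := by
  refine ⟨⟨?_, ?_⟩, ?_⟩
  · simp only [pairs, mem_map, Function.Embedding.subtype_apply]
    rintro _ ⟨d, -, rfl⟩
    exact isDiagonal_range_iff.2 d.2
  · simp only [pairs, mem_map, Function.Embedding.subtype_apply]
    rintro _ ⟨d, hd, rfl⟩ _ ⟨e, he, rfl⟩
    exact T.noncross d hd e he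
  · rw [pairs, card_map, T.card_eq, card_range]
    omega

theorem exists_pairs_eq {S : Finset (ℕ × ℕ)} (hS : IsTriangulation (range (m + 1)) S) :
    ∃ T : Triangulation m, T.pairs = S := by
  have hdiag : ∀ p ∈ S, IsDiag m p := fun p hp => isDiagonal_range_iff.1 (hS.1.1 p hp)
  refine ⟨⟨S.subtype (IsDiag m), fun d hd e he => hS.1.2 _ (mem_subtype.1 hd) _ (mem_subtype.1 he),
    ?_⟩, ?_⟩
  · rw [card_subtype, filter_true_of_mem hdiag]
    have := hS.2
    rw [card_range] at this
    omega
  · ext p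
    simp only [pairs, mem_map, mem_subtype, Function.Embedding.subtype_apply]
    exact ⟨by rintro ⟨d, hd, rfl⟩; exact hd, fun hp => ⟨⟨p, hdiag p hp⟩, hp, rfl⟩⟩

end Triangulation

theorem stmt16 (F : Type*) [Field F] (m : ℕ) (z : ℕ → P1 (ZMod 2)) (y : ℕ → P1 F)
    (hz : XCond (ZMod 2) m z) (hy : XCond F m y) :
    (∃ T : Triangulation m, ProperDiags T z ∧ ¬ ProperDiags T y) ↔
    ¬ ({d : Diagonal m | ¬ ValidDiag F m y d} ⊆
        {d : Diagonal m | ¬ ValidDiag (ZMod 2) m z d}) := by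
  classical
  rw [Set.not_subset]
  constructor
  · rintro ⟨T, hTz, hTy⟩
    obtain ⟨d, hdT, hyd⟩ : ∃ d ∈ T.diags, y d.val.1 = y d.val.2 := by
      simpa [ProperDiags] using hTy
    have hS := T.isTriangulation_pairs (by have := d.2.1; have := d.2.2.1; omega)
    refine ⟨d, fun h => h.1 hyd, not_not.2 (validDiag_iff.2 ?_)⟩
    exact hS.isValid_of_mem hz.properOnSides ((T.properDiags_iff z).1 hTz) (mem_map_of_mem _ hdT)
  · rintro ⟨d, hdy, hdz⟩
    obtain ⟨S, hS, hdS, hSz⟩ := exists_isTriangulation_mem_of_isValid hz.properOnSides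
      (isDiagonal_range_iff.2 d.2) (validDiag_iff.1 (not_not.1 hdz))
    obtain ⟨T, rfl⟩ := Triangulation.exists_pairs_eq hS
    refine ⟨T, (T.properDiags_iff z).2 hSz, fun hTy => hdy (validDiag_iff.2 ?_)⟩
    exact hS.isValid_of_mem hy.properOnSides ((T.properDiags_iff y).1 hTy) hdS
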